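/- Let v_1,…,v_n be valuations on a finite set Ω each in GGS(2,M), let p be an optimal price vector (a minimizer of the Lyapunov function L), and suppose the set MIN = { j ∈ Ω : p(j) ≤ p(j') for all j' ∈ Ω } of minimum-price items has |MIN| ≥ 2. Then in the bipartite graph whose vertex classes are the players and the items, with an edge (i, x) whenever {x} ∈ D_i(p), there is a matching that simultaneously covers every small player and every item of Ω \ MIN. -/
import Mathlib


open Finset

noncomputable section

variable {Ω : Type*}

/-- The utility of a set `S` under valuation `v` and price vector `p`. -/
def util (v : Finset Ω → ℝ) (p : Ω → ℝ) (S : Finset Ω) : ℝ := v S - ∑ j ∈ S, p j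

/-- The demand set: all sets maximizing utility. -/
def Demand (v : Finset Ω → ℝ) (p : Ω → ℝ) : Set (Finset Ω) :=
  {S | ∀ T : Finset Ω, util v p T ≤ util v p S}

/-- The minimal demand sets: demand sets all of whose proper subsets have strictly
smaller utility. -/
def DemandMin (v : Finset Ω → ℝ) (p : Ω → ℝ) : Set (Finset Ω) :=
  {S | S ∈ Demand v p ∧ ∀ T : Finset Ω, T ⊂ S → util v p T < util v p S}

/-- The maximum utility of a player. -/
def maxUtil [Fintype Ω] (v : Finset Ω → ℝ) (p : Ω → ℝ) : ℝ :=
  Finset.univ.sup' Finset.univ_nonempty (util v p)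

/-- A valuation: zero on the empty set and monotone under inclusion. -/
def IsValuation (v : Finset Ω → ℝ) : Prop :=
  v ∅ = 0 ∧ ∀ S T : Finset Ω, S ⊆ T → v S ≤ v T

/-- Gross substitutes: if prices (weakly) increase, there is a demanded set containing
all previously demanded items whose price did not change. -/
def GrossSubstitute (v : Finset Ω → ℝ) : Prop :=
  ∀ p q : Ω → ℝ, (∀ j, 0 ≤ p j) → (∀ j, p j ≤ q j) →
    ∀ S ∈ Demand v p, ∃ S' ∈ Demand v q, ∀ j ∈ S, p j = q j → j ∈ S'

/-- `GGS k M`: the `(k,M)`-truncations of gross substitute valuations. -/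
def GGS (k : ℕ) (M : ℝ) (v : Finset Ω → ℝ) : Prop :=
  ∃ g : Finset Ω → ℝ, IsValuation g ∧ GrossSubstitute g ∧
    (∀ S : Finset Ω, S.card < k → v S = g S ∧ g S ≤ M) ∧
    (∀ S : Finset Ω, k ≤ S.card → v S = M ∧ M ≤ g S)

/-- `f_{v,p}(S) = min_{D ∈ D*_v(p)} |D ∩ S|`. -/
def fMin [DecidableEq Ω] (v : Finset Ω → ℝ) (p : Ω → ℝ) (S : Finset Ω) : ℕ :=
  sInf ((fun D => (D ∩ S).card) '' DemandMin v p)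

/-- `f_p(S) = (Σ_i f_{i,p}(S)) − |S|`. -/
def fTot [DecidableEq Ω] {n : ℕ} (v : Fin n → Finset Ω → ℝ) (p : Ω → ℝ) (S : Finset Ω) : ℤ :=
  (∑ i, (fMin (v i) p S : ℤ)) - S.card

/-- The Lyapunov function `L(p) = Σ_i u_{i,p} + Σ_j p(j)`. -/
def Lyap [Fintype Ω] {n : ℕ} (v : Fin n → Finset Ω → ℝ) (p : Ω → ℝ) : ℝ :=
  (∑ i, maxUtil (v i) p) + ∑ j, p j

/-- An envy-free allocation: pairwise disjoint sets, each demanded by its player. -/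
def EnvyFree {n : ℕ} (v : Fin n → Finset Ω → ℝ) (p : Ω → ℝ) (A : Fin n → Finset Ω) : Prop :=
  (∀ i j, i ≠ j → Disjoint (A i) (A j)) ∧ ∀ i, A i ∈ Demand (v i) p

/-- A Walrasian allocation: envy-free, and every unallocated item has price zero. -/
def Walrasian {n : ℕ} (v : Fin n → Finset Ω → ℝ) (p : Ω → ℝ) (A : Fin n → Finset Ω) : Prop :=
  EnvyFree v p A ∧ ∀ x : Ω, (∀ i, x ∉ A i) → p x = 0

/-- `addInd p S = p + 1_S`: increase the price of every item of `S` by one. -/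
def addInd [DecidableEq Ω] (p : Ω → ℝ) (S : Finset Ω) : Ω → ℝ :=
  fun j => p j + if j ∈ S then 1 else 0

/-- An integer price vector. -/
def IsIntVec (p : Ω → ℝ) : Prop := ∀ j, ∃ z : ℤ, p j = z

/-- An integer-valued valuation. -/
def IsIntVal (v : Finset Ω → ℝ) : Prop := ∀ S : Finset Ω, ∃ z : ℤ, v S = z

/-- A small player: every demanded set is a singleton. -/
def SmallPlayer (v : Finset Ω → ℝ) (p : Ω → ℝ) : Prop :=
  ∀ S ∈ Demand v p, ∃ x, S = {x}


open scoped Classical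

section Aux

variable [Fintype Ω] [DecidableEq Ω]

lemma util_le_maxUtil (v : Finset Ω → ℝ) (p : Ω → ℝ) (T : Finset Ω) :
    util v p T ≤ maxUtil v p := Finset.le_sup' _ (Finset.mem_univ T)

lemma exists_mem_demand (v : Finset Ω → ℝ) (p : Ω → ℝ) :
    ∃ T, T ∈ Demand v p ∧ util v p T = maxUtil v p := by
  obtain ⟨T, _, h⟩ := Finset.exists_mem_eq_sup' (Finset.univ_nonempty) (util v p)
  exact ⟨T, fun T' => h ▸ util_le_maxUtil v p T', h.symm⟩

lemma demand_util_eq {v : Finset Ω → ℝ} {p : Ω → ℝ} {T : Finset Ω} (h : T ∈ Demand v p) :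
    util v p T = maxUtil v p := by
  obtain ⟨T₀, _, h₀⟩ := exists_mem_demand v p
  exact le_antisymm (util_le_maxUtil v p T) (h₀ ▸ h T₀)

/-- The "gap" of a player: distance from max utility to best non-demanded utility. -/
def gap (v : Finset Ω → ℝ) (p : Ω → ℝ) : ℝ :=
  if h : ((univ : Finset (Finset Ω)).filter (fun T => T ∉ Demand v p)).Nonempty
  then maxUtil v p - (Finset.filter (fun T => T ∉ Demand v p) univ).sup' h (util v p) else 1

lemma gap_pos (v : Finset Ω → ℝ) (p : Ω → ℝ) : 0 < gap v p := by
  unfold gap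
  split_ifs with h
  · rw [sub_pos, Finset.sup'_lt_iff]
    intro T hT
    rw [Finset.mem_filter] at hT
    obtain ⟨T', hT'⟩ := not_forall.mp hT.2
    push_neg at hT'
    obtain ⟨T₀, hd, he⟩ := exists_mem_demand v p
    exact lt_of_lt_of_le hT' (he ▸ hd T')
  · exact one_pos

lemma not_demand_util_le {v : Finset Ω → ℝ} {p : Ω → ℝ} {T : Finset Ω}
    (h : T ∉ Demand v p) : util v p T ≤ maxUtil v p - gap v p := by
  have hmem : T ∈ (univ : Finset (Finset Ω)).filter (fun T => T ∉ Demand v p) := by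
    simp only [Finset.mem_filter, Finset.mem_univ, true_and]; exact h
  have hne : ((univ : Finset (Finset Ω)).filter (fun T => T ∉ Demand v p)).Nonempty := ⟨T, hmem⟩
  unfold gap
  rw [dif_pos hne]
  have := Finset.le_sup' (util v p) hmem
  linarith

/-- Structural lemma: any demanded set with at least 2 elements consists of
minimum-price items. -/
lemma demand_large_subset_min {M : ℝ} {v : Finset Ω → ℝ}
    (hggs : GGS 2 M v) {p : Ω → ℝ} (hp : ∀ j, 0 ≤ p j)
    {MIN : Finset Ω} (hMINdef : ∀ j, j ∈ MIN ↔ ∀ j', p j ≤ p j') (hMINcard : 2 ≤ MIN.card)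
    {D : Finset Ω} (hD : D ∈ Demand v p) (hcard : 2 ≤ D.card) : D ⊆ MIN := by
  obtain ⟨a, ha, b, hb, hab⟩ := Finset.one_lt_card.mp (by omega : 1 < MIN.card)
  have pa : ∀ j', p a ≤ p j' := (hMINdef a).mp ha
  have pb : ∀ j', p b ≤ p j' := (hMINdef b).mp hb
  have pab : p a = p b := le_antisymm (pa b) (pb a)
  obtain ⟨g, _, _, _, hge⟩ := hggs
  have hvD : v D = M := (hge D hcard).1
  have hvab : v ({a, b} : Finset Ω) = M := by
    refine (hge _ ?_).1
    rw [Finset.card_pair hab]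
  have hsum : ∑ j ∈ D, p j ≤ p a + p b := by
    have := hD {a, b}
    rw [util, util, hvD, hvab, Finset.sum_pair hab] at this
    linarith
  intro j hj
  by_contra hjMIN
  obtain ⟨j0, hj0⟩ := not_forall.mp ((hMINdef j).not.mp hjMIN)
  have hpj : p a < p j := lt_of_le_of_lt (pa j0) (lt_of_not_ge hj0)
  obtain ⟨k, hk, hkj⟩ := Finset.exists_mem_ne (by omega : 1 < D.card) j
  have hjk : ∑ x ∈ ({j, k} : Finset Ω), p x ≤ ∑ x ∈ D, p x := by
    apply Finset.sum_le_sum_of_subset_of_nonneg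
    · intro x hx
      rcases Finset.mem_insert.mp hx with rfl | hx
      · exact hj
      · rwa [Finset.mem_singleton.mp hx]
    · intro x _ _; exact hp x
  rw [Finset.sum_pair (Ne.symm hkj)] at hjk
  have hpk : p a ≤ p k := pa k
  linarith

/-- Hall condition for small players. -/
lemma hall_small {n : ℕ} (v : Fin n → Finset Ω → ℝ) (p : Ω → ℝ)
    (hp : ∀ j, 0 ≤ p j) (hopt : ∀ q : Ω → ℝ, (∀ j, 0 ≤ q j) → Lyap v p ≤ Lyap v q)
    (W : Finset (Fin n)) (hW : ∀ i ∈ W, SmallPlayer (v i) p) :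
    W.card ≤ (W.biUnion (fun i =>
      univ.filter (fun x => ({x} : Finset Ω) ∈ Demand (v i) p))).card := by
  classical
  rcases W.eq_empty_or_nonempty with rfl | hWne
  · simp
  set N : Fin n → Finset Ω :=
    fun i => univ.filter (fun x => ({x} : Finset Ω) ∈ Demand (v i) p) with hN
  set S := W.biUnion N with hSdef
  set ε := (W.image (fun i => gap (v i) p)).min' (hWne.image _) with hε
  have hεpos : 0 < ε := by
    have := Finset.min'_mem (W.image (fun i => gap (v i) p)) (hWne.image _)
    rw [Finset.mem_image] at this
    obtain ⟨i, _, he⟩ := this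
    rw [hε, ← he]
    exact gap_pos _ _
  have hεle : ∀ i ∈ W, ε ≤ gap (v i) p := fun i hi =>
    Finset.min'_le _ _ (Finset.mem_image_of_mem _ hi)
  set q : Ω → ℝ := fun j => p j + if j ∈ S then ε else 0 with hqdef
  have hq : ∀ j, 0 ≤ q j := by
    intro j
    apply add_nonneg (hp j)
    split_ifs <;> [exact hεpos.le; rfl]
  have hsum : ∀ T : Finset Ω, ∑ j ∈ T, q j = ∑ j ∈ T, p j + ε * (T ∩ S).card := by
    intro T
    rw [hqdef]
    rw [Finset.sum_add_distrib, Finset.sum_ite_mem, Finset.sum_const, nsmul_eq_mul, mul_comm]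
  have hutil : ∀ i (T : Finset Ω),
      util (v i) q T = util (v i) p T - ε * (T ∩ S).card := by
    intro i T
    rw [util, util, hsum]
    ring
  have hA : ∀ i, maxUtil (v i) q ≤ maxUtil (v i) p := by
    intro i
    apply Finset.sup'_le
    intro T _
    rw [hutil]
    have : (0:ℝ) ≤ ε * (T ∩ S).card := by positivity
    linarith [util_le_maxUtil (v i) p T]
  have hB : ∀ i ∈ W, maxUtil (v i) q ≤ maxUtil (v i) p - ε := by
    intro i hi
    apply Finset.sup'_le
    intro T _
    rw [hutil]
    by_cases hT : T ∈ Demand (v i) p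
    · obtain ⟨x, rfl⟩ := hW i hi T hT
      have hxS : x ∈ S := by
        rw [hSdef, Finset.mem_biUnion]
        refine ⟨i, hi, ?_⟩
        rw [hN]
        simp only [Finset.mem_filter, Finset.mem_univ, true_and]
        exact hT
      rw [Finset.singleton_inter_of_mem hxS, Finset.card_singleton, demand_util_eq hT]
      simp
    · have h1 := not_demand_util_le hT
      have h2 := hεle i hi
      have : (0:ℝ) ≤ ε * (T ∩ S).card := by positivity
      linarith
  have hL := hopt q hq
  rw [Lyap, Lyap] at hL
  have hq_sum : ∑ j, q j = ∑ j, p j + ε * S.card := by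
    have := hsum univ
    rwa [Finset.univ_inter] at this
  have hdiff : ε * W.card ≤ ∑ i, (maxUtil (v i) p - maxUtil (v i) q) := by
    calc ε * W.card = ∑ _i ∈ W, ε := by rw [Finset.sum_const, nsmul_eq_mul, mul_comm]
    _ ≤ ∑ i ∈ W, (maxUtil (v i) p - maxUtil (v i) q) := by
        apply Finset.sum_le_sum
        intro i hi
        linarith [hB i hi]
    _ ≤ ∑ i, (maxUtil (v i) p - maxUtil (v i) q) := by
        apply Finset.sum_le_sum_of_subset_of_nonneg (Finset.subset_univ W)
        intro i _ _
        linarith [hA i]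
  have hsum_sub : ∑ i, (maxUtil (v i) p - maxUtil (v i) q)
      = (∑ i, maxUtil (v i) p) - ∑ i, maxUtil (v i) q := by
    rw [Finset.sum_sub_distrib]
  rw [hsum_sub] at hdiff
  rw [hq_sum] at hL
  have hfinal : ε * W.card ≤ ε * S.card := by linarith
  have := le_of_mul_le_mul_left (by linarith : ε * (W.card:ℝ) ≤ ε * (S.card:ℝ)) hεpos
  exact_mod_cast this

/-- Hall condition for items outside `MIN`. -/
lemma hall_items {n : ℕ} {M : ℝ} (v : Fin n → Finset Ω → ℝ) (p : Ω → ℝ)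
    (hp : ∀ j, 0 ≤ p j) (hopt : ∀ q : Ω → ℝ, (∀ j, 0 ≤ q j) → Lyap v p ≤ Lyap v q)
    (hggs : ∀ i, GGS 2 M (v i))
    (MIN : Finset Ω) (hMINdef : ∀ j, j ∈ MIN ↔ ∀ j', p j ≤ p j') (hMINcard : 2 ≤ MIN.card)
    (S : Finset Ω) (hS : ∀ x ∈ S, x ∉ MIN) :
    S.card ≤ (univ.filter (fun i => ∃ x ∈ S, ({x} : Finset Ω) ∈ Demand (v i) p)).card := by
  classical
  rcases S.eq_empty_or_nonempty with rfl | hSne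
  · simp
  obtain ⟨a, ha⟩ := Finset.card_pos.mp (by omega : 0 < MIN.card)
  have pa : ∀ j', p a ≤ p j' := (hMINdef a).mp ha
  have hpS : ∀ x ∈ S, 0 < p x := by
    intro x hx
    obtain ⟨j0, hj0⟩ := not_forall.mp ((hMINdef x).not.mp (hS x hx))
    exact lt_of_le_of_lt (hp j0) (lt_of_not_ge hj0)
  set c : ℝ := (Fintype.card Ω : ℝ) with hc
  have hc0 : 0 ≤ c := by positivity
  set E : Finset ℝ := insert (S.inf' hSne p)
    ((univ : Finset (Fin n)).image (fun i => gap (v i) p / (c + 1))) with hE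
  set ε := E.min' (Finset.insert_nonempty _ _) with hε
  have hεpos : 0 < ε := by
    have hmem : ε ∈ E := Finset.min'_mem E (Finset.insert_nonempty _ _)
    have hall : ∀ y ∈ E, 0 < y := by
      intro y hy
      rw [hE, Finset.mem_insert] at hy
      rcases hy with rfl | hy
      · obtain ⟨x, hx, hinf⟩ := Finset.exists_mem_eq_inf' hSne p
        rw [hinf]
        exact hpS x hx
      · rw [Finset.mem_image] at hy
        obtain ⟨i, _, hi⟩ := hy
        rw [← hi]
        exact div_pos (gap_pos _ _) (by linarith)
    exact hall ε hmem
  have hεinf : ∀ x ∈ S, ε ≤ p x := fun x hx =>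
    le_trans (Finset.min'_le _ _ (Finset.mem_insert_self _ _)) (Finset.inf'_le p hx)
  have hεgap : ∀ i : Fin n, ε * c ≤ gap (v i) p := by
    intro i
    have h1 : ε ≤ gap (v i) p / (c + 1) :=
      Finset.min'_le _ _ (Finset.mem_insert_of_mem (Finset.mem_image_of_mem _ (Finset.mem_univ i)))
    rw [le_div_iff₀ (by linarith : (0:ℝ) < c + 1)] at h1
    nlinarith
  set q : Ω → ℝ := fun j => p j - if j ∈ S then ε else 0 with hqdef
  have hq : ∀ j, 0 ≤ q j := by
    intro j
    simp only [hqdef]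
    split_ifs with h
    · linarith [hεinf j h]
    · simpa using hp j
  have hsum : ∀ T : Finset Ω, ∑ j ∈ T, q j = ∑ j ∈ T, p j - ε * (T ∩ S).card := by
    intro T
    rw [hqdef]
    rw [Finset.sum_sub_distrib, Finset.sum_ite_mem, Finset.sum_const, nsmul_eq_mul, mul_comm]
  have hutil : ∀ i (T : Finset Ω),
      util (v i) q T = util (v i) p T + ε * (T ∩ S).card := by
    intro i T
    rw [util, util, hsum]
    ring
  set N' : Finset (Fin n) :=
    univ.filter (fun i => ∃ x ∈ S, ({x} : Finset Ω) ∈ Demand (v i) p) with hN'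
  have hcardΩ : ∀ T : Finset Ω, ((T ∩ S).card : ℝ) ≤ c := by
    intro T
    rw [hc]
    exact_mod_cast Finset.card_le_univ _
  have hA : ∀ i, maxUtil (v i) q ≤ maxUtil (v i) p + (if i ∈ N' then ε else 0) := by
    intro i
    apply Finset.sup'_le
    intro T _
    rw [hutil]
    by_cases hT : T ∈ Demand (v i) p
    · rw [demand_util_eq hT]
      have hkey : ε * ((T ∩ S).card : ℝ) ≤ (if i ∈ N' then ε else 0) := by
        rcases le_or_gt 2 T.card with h2 | h2
        · have hTMIN := demand_large_subset_min (hggs i) hp hMINdef hMINcard hT h2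
          have : T ∩ S = ∅ := by
            rw [Finset.eq_empty_iff_forall_notMem]
            intro x hx
            rw [Finset.mem_inter] at hx
            exact hS x hx.2 (hTMIN hx.1)
          rw [this]
          simp only [Finset.card_empty, Nat.cast_zero, mul_zero]
          split_ifs <;> [exact hεpos.le; rfl]
        · rcases Finset.eq_empty_or_nonempty (T ∩ S) with he | ⟨x, hx⟩
          · rw [he]
            simp only [Finset.card_empty, Nat.cast_zero, mul_zero]
            split_ifs <;> [exact hεpos.le; rfl]
          · rw [Finset.mem_inter] at hx
            have hTx : T = {x} := by
              have h1 : 0 < T.card := Finset.card_pos.mpr ⟨x, hx.1⟩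
              have : T.card = 1 := by omega
              obtain ⟨y, hy⟩ := Finset.card_eq_one.mp this
              rw [hy] at hx ⊢
              rw [Finset.mem_singleton.mp hx.1]
            have hiN' : i ∈ N' := by
              rw [hN', Finset.mem_filter]
              exact ⟨Finset.mem_univ _, x, hx.2, hTx ▸ hT⟩
            rw [if_pos hiN']
            have : (T ∩ S).card ≤ 1 := by
              rw [hTx]
              exact le_trans (Finset.card_le_card (Finset.inter_subset_left)) (by simp)
            calc ε * ((T ∩ S).card : ℝ) ≤ ε * 1 := by
                  apply mul_le_mul_of_nonneg_left _ hεpos.le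
                  exact_mod_cast this
              _ = ε := mul_one ε
      linarith [hkey]
    · have h1 := not_demand_util_le hT
      have h2 := hεgap i
      have h3 : ε * ((T ∩ S).card : ℝ) ≤ ε * c :=
        mul_le_mul_of_nonneg_left (hcardΩ T) hεpos.le
      have h4 : (0:ℝ) ≤ (if i ∈ N' then ε else 0) := by
        split_ifs <;> [exact hεpos.le; rfl]
      linarith
  have hL := hopt q hq
  rw [Lyap, Lyap] at hL
  have hq_sum : ∑ j, q j = ∑ j, p j - ε * S.card := by
    have := hsum univ
    rwa [Finset.univ_inter] at this
  have hsumA : ∑ i, maxUtil (v i) q ≤ ∑ i, maxUtil (v i) p + ε * N'.card := by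
    calc ∑ i, maxUtil (v i) q
        ≤ ∑ i, (maxUtil (v i) p + (if i ∈ N' then ε else 0)) := Finset.sum_le_sum (fun i _ => hA i)
      _ = ∑ i, maxUtil (v i) p + ε * N'.card := by
          rw [Finset.sum_add_distrib, Finset.sum_ite_mem, Finset.univ_inter, Finset.sum_const,
            nsmul_eq_mul, mul_comm]
  rw [hq_sum] at hL
  have hfinal : ε * (S.card : ℝ) ≤ ε * (N'.card : ℝ) := by linarith
  have := le_of_mul_le_mul_left hfinal hεpos
  exact_mod_cast this

end Aux

/-- Mendelsohn–Dulmage-style combination lemma. -/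
lemma md_combine {α β : Type*} [DecidableEq α] [DecidableEq β]
    (r : α → β → Prop) (A : Finset α) (B : Finset β) (Q : Finset β) :
    ∀ (P1 : Finset α) (φ : α → β) (ψ : β → α),
      Set.InjOn φ ↑P1 → (∀ i ∈ P1, r i (φ i)) → A ⊆ P1 →
      Set.InjOn ψ ↑Q → (∀ x ∈ Q, r (ψ x) x) →
      (∀ x ∈ B, x ∉ P1.image φ → x ∈ Q) →
      (∀ x ∈ B, x ∉ Q → ∃ i ∈ P1, φ i = x ∧ ∀ y ∈ Q, ψ y ≠ i) →
      ∃ (P : Finset α) (φ' : α → β), Set.InjOn φ' ↑P ∧ (∀ i ∈ P, r i (φ' i)) ∧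
        A ⊆ P ∧ ∀ x ∈ B, ∃ i ∈ P, φ' i = x := by
  induction Q using Finset.strongInduction with
  | _ Q ih =>
  intro P1 φ ψ hφinj hφr hAP hψinj hψr h6 h7
  by_cases hB : ∀ x ∈ B, x ∈ P1.image φ
  · refine ⟨P1, φ, hφinj, hφr, hAP, fun x hx => ?_⟩
    obtain ⟨i, hi, he⟩ := Finset.mem_image.mp (hB x hx)
    exact ⟨i, hi, he⟩
  · push_neg at hB
    obtain ⟨x0, hx0B, hx0ni⟩ := hB
    have hx0Q : x0 ∈ Q := h6 x0 hx0B hx0ni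
    set i1 := ψ x0 with hi1def
    have hr1 : r i1 x0 := hψr x0 hx0Q
    have hQ' : Q.erase x0 ⊂ Q := Finset.erase_ssubset hx0Q
    have hx0img : ∀ j ∈ P1, φ j ≠ x0 := by
      intro j hj he
      exact hx0ni (Finset.mem_image.mpr ⟨j, hj, he⟩)
    have hψeq : ∀ y ∈ Q.erase x0, ψ y ≠ i1 := by
      intro y hy he
      have : y = x0 := hψinj (Finset.mem_coe.mpr (Finset.mem_of_mem_erase hy)) hx0Q he
      exact (Finset.ne_of_mem_erase hy) this
    by_cases hi1P : i1 ∈ P1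
    · refine ih (Q.erase x0) hQ' P1 (Function.update φ i1 x0) ψ ?_ ?_ hAP
        (hψinj.mono (by simp [Finset.coe_subset, Finset.erase_subset]))
        (fun x hx => hψr x (Finset.mem_of_mem_erase hx)) ?_ ?_
      · intro i hi j hj he
        rcases eq_or_ne i i1 with rfl | hii <;> rcases eq_or_ne j i1 with rfl | hjj
        · rfl
        · rw [Function.update_self, Function.update_of_ne hjj] at he
          exact absurd he.symm (hx0img j hj)
        · rw [Function.update_self, Function.update_of_ne hii] at he
          exact absurd he (hx0img i hi)
        · rw [Function.update_of_ne hii, Function.update_of_ne hjj] at he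
          exact hφinj hi hj he
      · intro i hi
        rcases eq_or_ne i i1 with rfl | hii
        · rwa [Function.update_self]
        · rw [Function.update_of_ne hii]; exact hφr i hi
      · intro x hxB hxni
        have hxx0 : x ≠ x0 := by
          rintro rfl
          exact hxni (Finset.mem_image.mpr ⟨i1, hi1P, Function.update_self _ _ _⟩)
        refine Finset.mem_erase.mpr ⟨hxx0, ?_⟩
        by_cases hxQ : x ∈ Q
        · exact hxQ
        · exfalso
          obtain ⟨i, hiP, hie, hprot⟩ := h7 x hxB hxQ
          have hii1 : i ≠ i1 := fun he => hprot x0 hx0Q (he ▸ rfl)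
          exact hxni (Finset.mem_image.mpr ⟨i, hiP, by
            rw [Function.update_of_ne hii1]; exact hie⟩)
      · intro x hxB hxQ'
        rcases eq_or_ne x x0 with rfl | hxx0
        · exact ⟨i1, hi1P, Function.update_self _ _ _, hψeq⟩
        · have hxQ : x ∉ Q := fun h => hxQ' (Finset.mem_erase.mpr ⟨hxx0, h⟩)
          obtain ⟨i, hiP, hie, hprot⟩ := h7 x hxB hxQ
          have hii1 : i ≠ i1 := fun he => hprot x0 hx0Q (he ▸ rfl)
          exact ⟨i, hiP, by rw [Function.update_of_ne hii1]; exact hie,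
            fun y hy => hprot y (Finset.mem_of_mem_erase hy)⟩
    · refine ih (Q.erase x0) hQ' (insert i1 P1) (Function.update φ i1 x0) ψ ?_ ?_
        (hAP.trans (Finset.subset_insert _ _))
        (hψinj.mono (by simp [Finset.coe_subset, Finset.erase_subset]))
        (fun x hx => hψr x (Finset.mem_of_mem_erase hx)) ?_ ?_
      · intro i hi j hj he
        simp only [Finset.coe_insert, Set.mem_insert_iff, Finset.mem_coe] at hi hj
        rcases hi with rfl | hi <;> rcases hj with rfl | hj
        · rfl
        · rw [Function.update_self,
            Function.update_of_ne (fun h => hi1P (by rw [← h]; exact hj))] at he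
          exact absurd he.symm (hx0img j hj)
        · rw [Function.update_self,
            Function.update_of_ne (fun h => hi1P (by rw [← h]; exact hi))] at he
          exact absurd he (hx0img i hi)
        · rw [Function.update_of_ne (fun h => hi1P (by rw [← h]; exact hi)),
            Function.update_of_ne (fun h => hi1P (by rw [← h]; exact hj))] at he
          exact hφinj hi hj he
      · intro i hi
        rcases Finset.mem_insert.mp hi with rfl | hi
        · rwa [Function.update_self]
        · rw [Function.update_of_ne (fun h => hi1P (by rw [← h]; exact hi))]; exact hφr i hi
      · intro x hxB hxni
        have hxx0 : x ≠ x0 := by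
          rintro rfl
          exact hxni (Finset.mem_image.mpr ⟨i1, Finset.mem_insert_self _ _,
            Function.update_self _ _ _⟩)
        refine Finset.mem_erase.mpr ⟨hxx0, h6 x hxB ?_⟩
        intro hximg
        obtain ⟨i, hiP, hie⟩ := Finset.mem_image.mp hximg
        exact hxni (Finset.mem_image.mpr ⟨i, Finset.mem_insert_of_mem hiP, by
          rw [Function.update_of_ne (fun h => hi1P (by rw [← h]; exact hiP))]; exact hie⟩)
      · intro x hxB hxQ'
        rcases eq_or_ne x x0 with rfl | hxx0
        · exact ⟨i1, Finset.mem_insert_self _ _, Function.update_self _ _ _, hψeq⟩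
        · have hxQ : x ∉ Q := fun h => hxQ' (Finset.mem_erase.mpr ⟨hxx0, h⟩)
          obtain ⟨i, hiP, hie, hprot⟩ := h7 x hxB hxQ
          exact ⟨i, Finset.mem_insert_of_mem hiP, by
            rw [Function.update_of_ne (fun h => hi1P (by rw [← h]; exact hiP))]; exact hie,
            fun y hy => hprot y (Finset.mem_of_mem_erase hy)⟩

/-- at an optimal price vector for `GGS(2,M)` valuations with at least two
minimum-price items, the bipartite demand graph on singletons has a matching covering
all small players and all items outside `MIN`. -/
theorem ggs2_matching_covers_small_and_expensive {Ω : Type*} [Fintype Ω] [DecidableEq Ω]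
    {n : ℕ} (M : ℝ) (hM : 0 ≤ M)
    (v : Fin n → Finset Ω → ℝ) (hval : ∀ i, IsValuation (v i))
    (hggs : ∀ i, GGS 2 M (v i))
    (p : Ω → ℝ) (hp : ∀ j, 0 ≤ p j)
    (hopt : ∀ q : Ω → ℝ, (∀ j, 0 ≤ q j) → Lyap v p ≤ Lyap v q)
    (MIN : Finset Ω) (hMINdef : ∀ j : Ω, j ∈ MIN ↔ ∀ j' : Ω, p j ≤ p j')
    (hMINcard : 2 ≤ MIN.card) :
    ∃ (P : Finset (Fin n)) (φ : Fin n → Ω),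
      Set.InjOn φ ↑P ∧
      (∀ i ∈ P, ({φ i} : Finset Ω) ∈ Demand (v i) p) ∧
      (∀ i : Fin n, SmallPlayer (v i) p → i ∈ P) ∧
      (∀ x : Ω, x ∉ MIN → ∃ i ∈ P, φ i = x) := by
  classical
  -- matching covering small players, via Hall
  have hΩne : Nonempty Ω := by
    rcases Finset.card_pos.mp (by omega : 0 < MIN.card) with ⟨a, ha⟩
    exact ⟨a⟩
  obtain ⟨a0, ha0⟩ := Finset.card_pos.mp (by omega : 0 < MIN.card)
  set r : Fin n → Ω → Prop := fun i x => ({x} : Finset Ω) ∈ Demand (v i) p with hr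
  set A : Finset (Fin n) := univ.filter (fun i => SmallPlayer (v i) p) with hA
  set B : Finset Ω := univ.filter (fun x => x ∉ MIN) with hB
  -- Hall for small players
  have hhall1 : ∀ s : Finset {i : Fin n // SmallPlayer (v i) p},
      s.card ≤ (s.biUnion (fun i => univ.filter (fun x => ({x} : Finset Ω) ∈ Demand (v i.1) p))).card := by
    intro s
    have hcard : s.card = (s.image Subtype.val).card :=
      (Finset.card_image_of_injective _ Subtype.val_injective).symm
    rw [hcard]
    have hbu : s.biUnion (fun i => univ.filter (fun x => ({x} : Finset Ω) ∈ Demand (v i.1) p))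
        = (s.image Subtype.val).biUnion
          (fun i => univ.filter (fun x => ({x} : Finset Ω) ∈ Demand (v i) p)) := by
      ext x
      simp only [Finset.mem_biUnion, Finset.mem_image]
      constructor
      · rintro ⟨i, hi, hx⟩; exact ⟨i.1, ⟨i, hi, rfl⟩, hx⟩
      · rintro ⟨j, ⟨i, hi, rfl⟩, hx⟩; exact ⟨i, hi, hx⟩
    rw [hbu]
    apply hall_small v p hp hopt
    intro i hi
    obtain ⟨i', _, rfl⟩ := Finset.mem_image.mp hi
    exact i'.2
  obtain ⟨f, hfinj, hfmem⟩ :=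
    (Finset.all_card_le_biUnion_card_iff_exists_injective _).mp hhall1
  set φ1 : Fin n → Ω := fun i =>
    if h : SmallPlayer (v i) p then f ⟨i, h⟩ else a0 with hφ1
  have hφ1inj : Set.InjOn φ1 ↑A := by
    intro i hi j hj he
    rw [hA, Finset.coe_filter] at hi hj
    obtain ⟨_, hsi⟩ := hi
    obtain ⟨_, hsj⟩ := hj
    rw [hφ1] at he
    simp only [dif_pos hsi, dif_pos hsj] at he
    exact congrArg Subtype.val (hfinj he)
  have hφ1r : ∀ i ∈ A, r i (φ1 i) := by
    intro i hi
    rw [hA, Finset.mem_filter] at hi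
    rw [hφ1, hr]
    simp only [dif_pos hi.2]
    have := hfmem ⟨i, hi.2⟩
    simpa using this
  -- Hall for items
  by_cases hne : Nonempty (Fin n)
  case neg =>
    -- no players: B must be empty
    have hBe : B = ∅ := by
      have := hall_items v p hp hopt hggs MIN hMINdef hMINcard B
        (fun x hx => (Finset.mem_filter.mp hx).2)
      have huniv : (univ : Finset (Fin n)) = ∅ := Finset.univ_eq_empty_iff.mpr
        (not_nonempty_iff.mp hne)
      rw [huniv] at this
      simp only [Finset.filter_empty, Finset.card_empty, Nat.le_zero] at this
      exact Finset.card_eq_zero.mp this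
    refine ⟨∅, fun _ => a0, ?_, ?_, ?_, ?_⟩
    · simp [Set.InjOn]
    · simp
    · intro i _; exact absurd ⟨i⟩ hne
    · intro x hx
      have hxB : x ∈ B := by
        rw [hB, Finset.mem_filter]
        exact ⟨Finset.mem_univ x, hx⟩
      rw [hBe] at hxB
      exact absurd hxB (Finset.notMem_empty x)
  case pos =>
  have hhall2 : ∀ s : Finset {x : Ω // x ∉ MIN},
      s.card ≤ (s.biUnion (fun x => univ.filter (fun i => ({x.1} : Finset Ω) ∈ Demand (v i) p))).card := by
    intro s
    have hcard : s.card = (s.image Subtype.val).card :=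
      (Finset.card_image_of_injective _ Subtype.val_injective).symm
    rw [hcard]
    have hbu : s.biUnion (fun x => univ.filter (fun i => ({x.1} : Finset Ω) ∈ Demand (v i) p))
        ⊇ univ.filter (fun i => ∃ x ∈ s.image Subtype.val, ({x} : Finset Ω) ∈ Demand (v i) p) := by
      intro i hi
      rw [Finset.mem_filter] at hi
      obtain ⟨_, x, hx, hd⟩ := hi
      obtain ⟨x', hx', rfl⟩ := Finset.mem_image.mp hx
      exact Finset.mem_biUnion.mpr ⟨x', hx',
        Finset.mem_filter.mpr ⟨Finset.mem_univ _, hd⟩⟩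
    refine le_trans ?_ (Finset.card_le_card hbu)
    apply hall_items v p hp hopt hggs MIN hMINdef hMINcard
    intro x hx
    obtain ⟨x', _, rfl⟩ := Finset.mem_image.mp hx
    exact x'.2
  obtain ⟨g, hginj, hgmem⟩ :=
    (Finset.all_card_le_biUnion_card_iff_exists_injective _).mp hhall2
  set ψ : Ω → Fin n := fun x =>
    if h : x ∉ MIN then g ⟨x, h⟩ else Classical.arbitrary (Fin n) with hψ
  have hψinj : Set.InjOn ψ ↑B := by
    intro x hx y hy he
    rw [hB, Finset.coe_filter] at hx hy
    obtain ⟨_, hsx⟩ := hx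
    obtain ⟨_, hsy⟩ := hy
    rw [hψ] at he
    simp only [dif_pos hsx, dif_pos hsy] at he
    exact congrArg Subtype.val (hginj he)
  have hψr : ∀ x ∈ B, r (ψ x) x := by
    intro x hx
    rw [hB, Finset.mem_filter] at hx
    rw [hψ, hr]
    simp only [dif_pos hx.2]
    have := hgmem ⟨x, hx.2⟩
    simpa using this
  obtain ⟨P, φ', hinj, hrr, hAP, hcov⟩ := md_combine r A B B A φ1 ψ hφ1inj hφ1r
    (subset_rfl) hψinj hψr (fun x hx _ => hx) (fun x hx hxQ => absurd hx hxQ)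
  refine ⟨P, φ', hinj, ?_, ?_, ?_⟩
  · intro i hi
    exact hrr i hi
  · intro i hsmall
    apply hAP
    rw [hA, Finset.mem_filter]
    exact ⟨Finset.mem_univ _, hsmall⟩
  · intro x hx
    apply hcov
    rw [hB, Finset.mem_filter]
    exact ⟨Finset.mem_univ x, hx⟩
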